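/- arXiv:2605.17674 — 3 statements merged into one kernel-verified Lean document; each statement's English description precedes it below -/
import Mathlib

section
/- Let b = r/N be a rational number with N a positive integer, and let p be a prime with p > (N + sqrt(N^2 + N·|b|))^2. If a is an integer with |a| ≤ 2·sqrt(p) and a ≡ b (mod p) in the sense that p divides N·a − r, then a = b (i.e., N·a = r). -/
/-! If `N a ≢ r` then `p ∣ N a - r` forces `p ≤ |N a - r| ≤ 2 N √p + |r|`; the choice of the constant
`K = (N + √(N² + N|b|))²` is exactly what makes `2 N √p + |r| < p` for `p > K`. -/

/-- `s = x + √(x² + c)` is the larger root of `s² - 2 x s - c`. -/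
theorem two_mul_mul_add_lt_sq_of_add_sqrt_lt {x c s : ℝ} (h : x + √(x ^ 2 + c) < s) :
    2 * x * s + c < s ^ 2 := by
  have hsx : 0 < s - x := by linarith [Real.sqrt_nonneg (x ^ 2 + c)]
  have : x ^ 2 + c < (s - x) ^ 2 := (Real.sqrt_lt' hsx).mp (by linarith)
  nlinarith

theorem hasse_rigidity_rat_general (r : ℤ) (N : ℕ) (hN : 0 < N) (p : ℕ)
    (hpK : ((N : ℝ) + Real.sqrt ((N : ℝ) ^ 2 + (N : ℝ) * |(r : ℝ) / (N : ℝ)|)) ^ 2 < (p : ℝ))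
    (a : ℤ) (ha : |(a : ℝ)| ≤ 2 * Real.sqrt p)
    (hdvd : (p : ℤ) ∣ (N : ℤ) * a - r) :
    (N : ℤ) * a = r := by
  have hNpos : (0 : ℝ) < N := by exact_mod_cast hN
  have hr : (N : ℝ) * |(r : ℝ) / N| = |(r : ℝ)| := by
    rw [abs_div, Nat.abs_cast, mul_div_cancel₀ _ hNpos.ne']
  have hKp : (N : ℝ) + √((N : ℝ) ^ 2 + |(r : ℝ)|) < √p := by
    rw [← hr]
    exact (Real.lt_sqrt (by positivity)).mpr hpK
  have hgap : 2 * N * √p + |(r : ℝ)| < p := by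
    simpa [Real.sq_sqrt (Nat.cast_nonneg p)] using two_mul_mul_add_lt_sq_of_add_sqrt_lt hKp
  have hsmall : |((N : ℤ) * a - r : ℝ)| < p :=
    calc |((N : ℤ) * a - r : ℝ)| ≤ N * |(a : ℝ)| + |(r : ℝ)| := by
          simpa [abs_mul] using abs_sub ((N : ℝ) * a) r
      _ ≤ 2 * N * √p + |(r : ℝ)| := by nlinarith
      _ < p := hgap
  have hzero := Int.eq_zero_of_abs_lt_dvd hdvd (by exact_mod_cast hsmall)
  linarith

/-- Hasse-bound rigidity: if `b = r/N` is a fixed rational, `p` is a prime exceeding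
`(N + √(N² + N|b|))²`, and `a` is an integer in the Hasse range `|a| ≤ 2√p` with
`a ≡ b (mod p)` (meaning `p ∣ N·a − r`), then `a = b`, i.e. `N·a = r`. -/
theorem hasse_rigidity_rat (r : ℤ) (N : ℕ) (hN : 0 < N) (p : ℕ) (hp : p.Prime)
    (hpK : ((N : ℝ) + Real.sqrt ((N : ℝ) ^ 2 + (N : ℝ) * |(r : ℝ) / (N : ℝ)|)) ^ 2 < (p : ℝ))
    (a : ℤ) (ha : |(a : ℝ)| ≤ 2 * Real.sqrt p)
    (hdvd : (p : ℤ) ∣ (N : ℤ) * a - r) :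
    (N : ℤ) * a = r :=
  hasse_rigidity_rat_general r N hN p hpK a ha hdvd
end

section
/- Let ℓ be a prime, g ≥ 1, and let H_m = {M ∈ GSp_{2g}(ℤ/ℓ^m ℤ) : tr M = 0}. Then #H_1 ≤ #GSp_{2g}(𝔽_ℓ)/ℓ · C for an absolute constant C depending only on g; equivalently, the proportion of trace-zero elements of GSp_{2g}(𝔽_ℓ) is O(1/ℓ). -/
/-- The standard symplectic form matrix `J` on a rank-`2g` module. -/
def symplJ (g : ℕ) (R : Type*) [CommRing R] :
    Matrix (Fin g ⊕ Fin g) (Fin g ⊕ Fin g) R :=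
  Matrix.fromBlocks 0 1 (-1) 0

/-- The set of symplectic similitudes `GSp_{2g}` over `R`. -/
def GSpSet (g : ℕ) (R : Type*) [CommRing R] :
    Set (Matrix (Fin g ⊕ Fin g) (Fin g ⊕ Fin g) R) :=
  {M | ∃ ν : Rˣ, M.transpose * symplJ g R * M = (ν : R) • symplJ g R}

/-!
Right multiplication by `[[1, tE], [0, 1]]` or `[[1, 0], [tF, 1]]` with `E`, `F` symmetric
preserves `GSp_{2g}(K)` and is a free action of `(K, +)`. For `M = [[A, B], [C, D]]` it moves
`tr M` by `t · tr (C E)`, the symmetric part `C + Cᵀ` by `t · (D F + (D F)ᵀ)`, and `D` by `t · C E`.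
So a trace-zero `M` lies in one of `g² + g + 1` sets on which one of these quantities vanishes while
its slope does not: `E = e_jk + e_kj` works when `C + Cᵀ ≠ 0`; otherwise `F = e_kk` works for a
nonzero column `k` of `D`, provided `2 ≠ 0`; and if `D = 0`, then `C` is invertible since
`Mᵀ J M = ν J`, so `E = 1` works. Each set meets every orbit at most once, hence has at most
`#GSp_{2g}(K) / |K|` elements. For `ℓ = 2` the bound is trivial.
-/

open Matrix

theorem card_mul_ncard_le_ncard_of_orbit_meets_once {α T : Type*} [Monoid α] [Group T] [Finite α]
    (u : T →* α) {G X : Set α} (hXG : X ⊆ G) (hG : ∀ M ∈ G, ∀ t, M * u t ∈ G)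
    (hX : ∀ M ∈ X, ∀ t, M * u t ∈ X → t = 1) :
    Nat.card T * X.ncard ≤ G.ncard := by
  have cancel : ∀ M t, M * u t * u t⁻¹ = M := fun M t => by
    rw [mul_assoc, ← map_mul, mul_inv_cancel, map_one, mul_one]
  let f : T × X → G := fun p => ⟨p.2 * u p.1, hG _ (hXG p.2.2) p.1⟩
  have hf : Function.Injective f := by
    rintro ⟨t, M, hM⟩ ⟨t', M', hM'⟩ h
    replace h : M * u t = M' * u t' := congrArg Subtype.val h
    have hMM' : M = M' * u (t' * t⁻¹) := by
      rw [map_mul, ← mul_assoc, ← h, cancel]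
    obtain rfl : t' = t := mul_inv_eq_one.mp (hX M' hM' _ (hMM' ▸ hM))
    obtain rfl : M = M' := by simpa using hMM'
    rfl
  simpa [Nat.card_prod, Nat.card_coe_set_eq] using Nat.card_le_card_of_injective f hf

theorem card_mul_ncard_le_ncard_of_affine {K α V : Type*} [Field K] [Monoid α] [Finite α]
    [AddCommGroup V] [Module K V] (u : Multiplicative K →* α) {G : Set α}
    (hG : ∀ M ∈ G, ∀ t, M * u t ∈ G) (φ ψ : α → V)
    (hφ : ∀ M (t : K), φ (M * u (.ofAdd t)) = φ M + t • ψ M) :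
    Nat.card K * {M ∈ G | φ M = 0 ∧ ψ M ≠ 0}.ncard ≤ G.ncard := by
  refine card_mul_ncard_le_ncard_of_orbit_meets_once u (fun M hM => hM.1) hG ?_
  rintro M ⟨-, hφM, hψM⟩ t ⟨-, hφt, -⟩
  rw [← ofAdd_toAdd t, hφ, hφM, zero_add, smul_eq_zero] at hφt
  simpa using hφt.resolve_right hψM

namespace Matrix

variable {m n R : Type*} [Fintype m] [Fintype n]

theorem trace_fromBlocks [AddCommMonoid R]
    (A : Matrix m m R) (B : Matrix m n R) (C : Matrix n m R) (D : Matrix n n R) :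
    (fromBlocks A B C D).trace = A.trace + D.trace := by
  simp [trace, Fintype.sum_sum_type]

theorem trace_eq_trace_toBlocks₁₁_add_trace_toBlocks₂₂ [AddCommMonoid R]
    (M : Matrix (m ⊕ n) (m ⊕ n) R) : M.trace = M.toBlocks₁₁.trace + M.toBlocks₂₂.trace := by
  conv_lhs => rw [← fromBlocks_toBlocks M]
  exact trace_fromBlocks ..

variable [DecidableEq n] [CommRing R]

def upperUnipotent (E : Matrix n n R) : Multiplicative R →* Matrix (n ⊕ n) (n ⊕ n) R where
  toFun t := fromBlocks 1 (t.toAdd • E) 0 1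
  map_one' := by simp
  map_mul' s t := by simp [fromBlocks_multiply, add_smul, add_comm]

def lowerUnipotent (F : Matrix n n R) : Multiplicative R →* Matrix (n ⊕ n) (n ⊕ n) R where
  toFun t := fromBlocks 1 0 (t.toAdd • F) 1
  map_one' := by simp
  map_mul' s t := by simp [fromBlocks_multiply, add_smul, add_comm]

theorem mul_upperUnipotent (M : Matrix (n ⊕ n) (n ⊕ n) R) (E : Matrix n n R) (t : R) :
    M * upperUnipotent E (.ofAdd t) = fromBlocks M.toBlocks₁₁
      (M.toBlocks₁₂ + t • (M.toBlocks₁₁ * E)) M.toBlocks₂₁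
      (M.toBlocks₂₂ + t • (M.toBlocks₂₁ * E)) := by
  conv_lhs => rw [← fromBlocks_toBlocks M]
  simp [upperUnipotent, fromBlocks_multiply, add_comm]

theorem mul_lowerUnipotent (M : Matrix (n ⊕ n) (n ⊕ n) R) (F : Matrix n n R) (t : R) :
    M * lowerUnipotent F (.ofAdd t) = fromBlocks
      (M.toBlocks₁₁ + t • (M.toBlocks₁₂ * F)) M.toBlocks₁₂
      (M.toBlocks₂₁ + t • (M.toBlocks₂₂ * F)) M.toBlocks₂₂ := by
  conv_lhs => rw [← fromBlocks_toBlocks M]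
  simp [lowerUnipotent, fromBlocks_multiply, add_comm]

theorem trace_mul_single_add_transpose (C : Matrix n n R) (j k : n) :
    (C * (single j k 1 + (single j k 1)ᵀ)).trace = (C + Cᵀ) k j := by
  simp [Matrix.mul_add, trace_mul_single, add_comm]

theorem mul_single_add_transpose_ne_zero [NoZeroDivisors R] {D : Matrix n n R}
    (h2 : (2 : R) ≠ 0) {i k : n} (hik : D i k ≠ 0) :
    D * single k k 1 + (D * single k k 1)ᵀ ≠ 0 := by
  intro h
  have hik' := congrFun (congrFun h i) k
  rcases eq_or_ne i k with rfl | hne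
  · simp only [add_apply, transpose_apply, mul_single_apply_same, mul_one, ← two_mul] at hik'
    exact mul_ne_zero h2 hik hik'
  · simp [hne] at hik'
    exact hik hik'

end Matrix

section GSp

variable {g : ℕ}

section CommRing

variable {R : Type*} [CommRing R]

theorem mul_mem_GSpSet {M U : Matrix (Fin g ⊕ Fin g) (Fin g ⊕ Fin g) R} (hM : M ∈ GSpSet g R)
    (hU : Uᵀ * symplJ g R * U = symplJ g R) : M * U ∈ GSpSet g R := by
  obtain ⟨ν, hν⟩ := hM
  refine ⟨ν, ?_⟩
  calc (M * U)ᵀ * symplJ g R * (M * U) = Uᵀ * (Mᵀ * symplJ g R * M) * U := by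
        simp only [transpose_mul, Matrix.mul_assoc]
    _ = (ν : R) • symplJ g R := by rw [hν, Matrix.mul_smul, Matrix.smul_mul, hU]

theorem transpose_upperUnipotent_mul_symplJ {E : Matrix (Fin g) (Fin g) R} (hE : Eᵀ = E)
    (t : Multiplicative R) :
    (upperUnipotent E t)ᵀ * symplJ g R * upperUnipotent E t = symplJ g R := by
  simp [upperUnipotent, symplJ, fromBlocks_transpose, fromBlocks_multiply, hE]

theorem transpose_lowerUnipotent_mul_symplJ {F : Matrix (Fin g) (Fin g) R} (hF : Fᵀ = F)
    (t : Multiplicative R) :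
    (lowerUnipotent F t)ᵀ * symplJ g R * lowerUnipotent F t = symplJ g R := by
  simp [lowerUnipotent, symplJ, fromBlocks_transpose, fromBlocks_multiply, hF]

theorem isUnit_toBlocks₂₁_of_toBlocks₂₂_eq_zero
    {M : Matrix (Fin g ⊕ Fin g) (Fin g ⊕ Fin g) R} (hM : M ∈ GSpSet g R)
    (hD : M.toBlocks₂₂ = 0) : IsUnit M.toBlocks₂₁ := by
  obtain ⟨ν, hν⟩ := hM
  have h₁₂ : M.toBlocks₂₁ᵀ * M.toBlocks₁₂ = (-ν : R) • 1 := by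
    have := congrArg toBlocks₁₂ hν
    rw [← fromBlocks_toBlocks M, hD] at this
    simpa [symplJ, fromBlocks_transpose, fromBlocks_multiply, fromBlocks_smul,
      neg_eq_iff_eq_neg] using this
  have hinv : M.toBlocks₂₁ᵀ * ((-ν⁻¹ : Rˣ) : R) • M.toBlocks₁₂ = 1 := by
    rw [Matrix.mul_smul, h₁₂, smul_smul]
    simp
  exact (isUnit_transpose _).mp <|
    (isUnit_iff_isUnit_det _).mpr (isUnit_det_of_right_inverse hinv)

end CommRing

theorem trace_eq_zero_subset_union {K : Type*} [Field K] [NeZero g] (h2 : (2 : K) ≠ 0) :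
    {M ∈ GSpSet g K | M.trace = 0} ⊆
      (⋃ p : Fin g × Fin g, {M ∈ GSpSet g K | M.trace = 0 ∧
          (M.toBlocks₂₁ * (single p.1 p.2 1 + (single p.1 p.2 1)ᵀ)).trace ≠ 0}) ∪
      (⋃ k : Fin g, {M ∈ GSpSet g K | M.toBlocks₂₁ + M.toBlocks₂₁ᵀ = 0 ∧
          M.toBlocks₂₂ * single k k 1 + (M.toBlocks₂₂ * single k k 1)ᵀ ≠ 0}) ∪
      {M ∈ GSpSet g K | M.toBlocks₂₂ = 0 ∧ M.toBlocks₂₁ ≠ 0} := by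
  rintro M ⟨hM, htr⟩
  by_cases hC : M.toBlocks₂₁ + M.toBlocks₂₁ᵀ = 0
  · by_cases hD : M.toBlocks₂₂ = 0
    · exact Or.inr ⟨hM, hD, (isUnit_toBlocks₂₁_of_toBlocks₂₂_eq_zero hM hD).ne_zero⟩
    · obtain ⟨i, k, hik⟩ : ∃ i k, M.toBlocks₂₂ i k ≠ 0 := by
        by_contra! h
        exact hD (Matrix.ext h)
      exact Or.inl (Or.inr (Set.mem_iUnion.mpr
        ⟨k, hM, hC, mul_single_add_transpose_ne_zero h2 hik⟩))
  · obtain ⟨j, k, hjk⟩ : ∃ j k, (M.toBlocks₂₁ + M.toBlocks₂₁ᵀ) j k ≠ 0 := by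
      by_contra! h
      exact hC (Matrix.ext h)
    refine Or.inl (Or.inl (Set.mem_iUnion.mpr ⟨(k, j), hM, htr, ?_⟩))
    rwa [trace_mul_single_add_transpose]

section FiniteField

variable {K : Type*} [Field K] [Finite K]

theorem card_mul_ncard_trace_eq_zero_and_trace_mul_ne_zero_le {E : Matrix (Fin g) (Fin g) K}
    (hE : Eᵀ = E) :
    Nat.card K * {M ∈ GSpSet g K | M.trace = 0 ∧ (M.toBlocks₂₁ * E).trace ≠ 0}.ncard
      ≤ (GSpSet g K).ncard :=
  card_mul_ncard_le_ncard_of_affine (upperUnipotent E)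
    (fun _ hM t => mul_mem_GSpSet hM (transpose_upperUnipotent_mul_symplJ hE t))
    trace (fun M => (M.toBlocks₂₁ * E).trace) fun M t => by
      rw [mul_upperUnipotent, trace_fromBlocks, trace_add, trace_smul,
        trace_eq_trace_toBlocks₁₁_add_trace_toBlocks₂₂ M, add_assoc]

theorem card_mul_ncard_add_transpose_eq_zero_and_ne_zero_le {F : Matrix (Fin g) (Fin g) K}
    (hF : Fᵀ = F) :
    Nat.card K * {M ∈ GSpSet g K | M.toBlocks₂₁ + M.toBlocks₂₁ᵀ = 0 ∧
        M.toBlocks₂₂ * F + (M.toBlocks₂₂ * F)ᵀ ≠ 0}.ncard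
      ≤ (GSpSet g K).ncard :=
  card_mul_ncard_le_ncard_of_affine (lowerUnipotent F)
    (fun _ hM t => mul_mem_GSpSet hM (transpose_lowerUnipotent_mul_symplJ hF t))
    (fun M => M.toBlocks₂₁ + M.toBlocks₂₁ᵀ) (fun M => M.toBlocks₂₂ * F + (M.toBlocks₂₂ * F)ᵀ)
    fun M t => by
      simp only [mul_lowerUnipotent, toBlocks_fromBlocks₂₁, transpose_add, transpose_smul]
      module

theorem card_mul_ncard_toBlocks₂₂_eq_zero_and_toBlocks₂₁_ne_zero_le :
    Nat.card K * {M ∈ GSpSet g K | M.toBlocks₂₂ = 0 ∧ M.toBlocks₂₁ ≠ 0}.ncard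
      ≤ (GSpSet g K).ncard := by
  refine card_mul_ncard_le_ncard_of_affine (upperUnipotent (1 : Matrix (Fin g) (Fin g) K))
    (fun _ hM t => mul_mem_GSpSet hM (transpose_upperUnipotent_mul_symplJ transpose_one t))
    (fun M => M.toBlocks₂₂) (fun M => M.toBlocks₂₁) fun M t => ?_
  rw [mul_upperUnipotent, toBlocks_fromBlocks₂₂, Matrix.mul_one]

theorem card_mul_ncard_trace_eq_zero_le [NeZero g] (h2 : (2 : K) ≠ 0) :
    Nat.card K * {M ∈ GSpSet g K | M.trace = 0}.ncard
      ≤ (g ^ 2 + g + 1) * (GSpSet g K).ncard := by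
  have union_bound := (Set.ncard_le_ncard (trace_eq_zero_subset_union (g := g) h2)).trans <|
    (Set.ncard_union_le _ _).trans <| add_le_add_left ((Set.ncard_union_le _ _).trans <|
      add_le_add (Set.ncard_iUnion_le_of_fintype _) (Set.ncard_iUnion_le_of_fintype _)) _
  refine (Nat.mul_le_mul_left (Nat.card K) union_bound).trans ?_
  rw [mul_add, mul_add, Finset.mul_sum, Finset.mul_sum]
  calc _ ≤ ∑ _p : Fin g × Fin g, (GSpSet g K).ncard + ∑ _k : Fin g, (GSpSet g K).ncard
        + (GSpSet g K).ncard := by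
        gcongr
        · exact card_mul_ncard_trace_eq_zero_and_trace_mul_ne_zero_le
            (by rw [transpose_add, transpose_transpose, add_comm])
        · exact card_mul_ncard_add_transpose_eq_zero_and_ne_zero_le (by rw [transpose_single])
        · exact card_mul_ncard_toBlocks₂₂_eq_zero_and_toBlocks₂₁_ne_zero_le
    _ = (g ^ 2 + g + 1) * (GSpSet g K).ncard := by
        simp only [Finset.sum_const, Finset.card_univ, Fintype.card_prod, Fintype.card_fin,
          smul_eq_mul]
        ring

end FiniteField

theorem mul_ncard_trace_eq_zero_le_of_prime {ℓ : ℕ} (hℓ : ℓ.Prime) [NeZero g] :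
    ℓ * {M ∈ GSpSet g (ZMod ℓ) | M.trace = 0}.ncard
      ≤ (g ^ 2 + g + 1) * (GSpSet g (ZMod ℓ)).ncard := by
  obtain rfl | hℓ2 := eq_or_ne ℓ 2
  · calc 2 * {M ∈ GSpSet g (ZMod 2) | M.trace = 0}.ncard ≤ 2 * (GSpSet g (ZMod 2)).ncard :=
          Nat.mul_le_mul_left 2 (Set.ncard_le_ncard (Set.sep_subset _ _))
      _ ≤ (g ^ 2 + g + 1) * (GSpSet g (ZMod 2)).ncard := by
          gcongr
          have := NeZero.one_le (n := g)
          omega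
  · have := Fact.mk hℓ
    have h2 : (2 : ZMod ℓ) ≠ 0 := Ring.two_ne_zero (by rwa [ZMod.ringChar_zmod_n])
    simpa using card_mul_ncard_trace_eq_zero_le h2

end GSp

/-- The trace-zero locus in `GSp_{2g}(𝔽_ℓ)` has proportion `O(1/ℓ)`: there is a
constant `C` depending only on `g` such that for every prime `ℓ`,
`#{M ∈ GSp_{2g}(𝔽_ℓ) : tr M = 0} ≤ C · #GSp_{2g}(𝔽_ℓ) / ℓ`. -/
theorem gsp_trace_zero_proportion (g : ℕ) (hg : 1 ≤ g) :
    ∃ C : ℝ, 0 < C ∧ ∀ ℓ : ℕ, ℓ.Prime →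
      (({M ∈ GSpSet g (ZMod ℓ) | M.trace = 0}.ncard : ℝ)
        ≤ C * ((GSpSet g (ZMod ℓ)).ncard : ℝ) / (ℓ : ℝ)) := by
  have : NeZero g := ⟨by omega⟩
  refine ⟨g ^ 2 + g + 1, by positivity, fun ℓ hℓ => ?_⟩
  rw [le_div_iff₀ (by exact_mod_cast hℓ.pos), mul_comm]
  exact_mod_cast mul_ncard_trace_eq_zero_le_of_prime hℓ
end

section
/- Let E be an elliptic curve over ℚ with complex multiplication, and assume Hecke's equidistribution: the density of good primes p with θ_p ∈ [α, β] (where cos θ_p = a_p/(2√p)) equals δ₀/2 + (β−α)/(2π), with δ₀ = 1 if π/2 ∈ [α,β] and 0 otherwise. Then for any fixed nonzero rational b, the set of good primes p with a_p(E) = b has natural density 0. -/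
open Filter Real
open scoped Classical

/-- Number of primes `p ≤ X` lying in `S`. -/
noncomputable def primeCountIn (S : Set ℕ) (X : ℕ) : ℕ :=
  ((Finset.range (X + 1)).filter (fun p => p.Prime ∧ p ∈ S)).card

/-- `S` has natural density `d` within the primes. -/
noncomputable def HasPrimeDensity (S : Set ℕ) (d : ℝ) : Prop :=
  Tendsto (fun X : ℕ => (primeCountIn S X : ℝ) / (primeCountIn Set.univ X : ℝ))
    atTop (nhds d)

lemma primeCountIn_univ_eq (X : ℕ) : primeCountIn Set.univ X = Nat.primeCounting X := by
  rw [Nat.primeCounting, Nat.primeCounting', Nat.count_eq_card_filter_range]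
  unfold primeCountIn
  congr 1
  ext p
  simp [Finset.mem_filter]

lemma primeCountIn_union_inter (A B : Set ℕ) (X : ℕ) :
    primeCountIn (A ∪ B) X + primeCountIn (A ∩ B) X
      = primeCountIn A X + primeCountIn B X := by
  unfold primeCountIn
  convert Finset.card_union_add_card_inter
    ((Finset.range (X + 1)).filter (fun p => p.Prime ∧ p ∈ A))
    ((Finset.range (X + 1)).filter (fun p => p.Prime ∧ p ∈ B)) using 2
  · refine congrArg Finset.card ?_
    ext p
    simp only [Finset.mem_union, Finset.mem_filter, Set.mem_union]
    tauto
  · refine congrArg Finset.card ?_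
    ext p
    simp only [Finset.mem_inter, Finset.mem_filter, Set.mem_inter_iff]
    tauto
  · refine congrArg Finset.card ?_
    ext p
    simp only [Finset.mem_filter]

lemma tendsto_primeCountIn_univ :
    Tendsto (fun X : ℕ => (primeCountIn Set.univ X : ℝ)) atTop atTop := by
  have h : Tendsto (fun X : ℕ => primeCountIn Set.univ X) atTop atTop := by
    have : (fun X : ℕ => primeCountIn Set.univ X) = Nat.primeCounting :=
      funext primeCountIn_univ_eq
    rw [this]
    exact Nat.tendsto_primeCounting
  exact tendsto_natCast_atTop_atTop.comp h

/-- CM (Hecke) case: if the Frobenius angles `θ_p` obey Hecke's equidistribution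
law `δ₀/2 + (β−α)/(2π)` (with an atom `δ₀ = 1` at `π/2`), then for any fixed
nonzero rational `b` the set of good primes with `a_p = b` has density `0`. -/
theorem hecke_implies_density_zero
    (good : ℕ → Prop) (a : ℕ → ℤ) (θ : ℕ → ℝ)
    (hθ : ∀ p : ℕ, p.Prime → good p → θ p ∈ Set.Icc 0 π)
    (hcos : ∀ p : ℕ, p.Prime → good p →
      Real.cos (θ p) = (a p : ℝ) / (2 * Real.sqrt p))
    (hHecke : ∀ α β : ℝ, 0 ≤ α → α < β → β ≤ π →
      HasPrimeDensity {p : ℕ | good p ∧ α ≤ θ p ∧ θ p ≤ β}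
        ((if π / 2 ∈ Set.Icc α β then (1 : ℝ) else 0) / 2 + (β - α) / (2 * π)))
    (b : ℚ) (hb : b ≠ 0) :
    HasPrimeDensity {p : ℕ | good p ∧ (a p : ℚ) = b} 0 := by
  have hπ : (0 : ℝ) < π := Real.pi_pos
  set S : Set ℕ := {p : ℕ | good p ∧ (a p : ℚ) = b} with hSdef
  set A : Set ℕ := {p : ℕ | good p ∧ θ p = π / 2} with hAdef
  -- denominator
  set d : ℕ → ℝ := fun X => (primeCountIn Set.univ X : ℝ) with hddef
  have hden : Tendsto d atTop atTop := tendsto_primeCountIn_univ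
  -- The atom at π/2 has density 1/2
  have hA : Tendsto (fun X => (primeCountIn A X : ℝ) / d X) atTop (nhds (1 / 2)) := by
    have h1 := hHecke (π / 4) (π / 2) (by positivity) (by linarith) (by linarith)
    have h2 := hHecke (π / 2) (3 * π / 4) (by positivity) (by linarith) (by linarith)
    have h3 := hHecke (π / 4) (3 * π / 4) (by positivity) (by linarith) (by linarith)
    rw [if_pos (by rw [Set.mem_Icc]; constructor <;> linarith)] at h1 h2 h3
    have e1 : (1 : ℝ) / 2 + (π / 2 - π / 4) / (2 * π) = 5 / 8 := by
      field_simp; ring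
    have e2 : (1 : ℝ) / 2 + (3 * π / 4 - π / 2) / (2 * π) = 5 / 8 := by
      field_simp; ring
    have e3 : (1 : ℝ) / 2 + (3 * π / 4 - π / 4) / (2 * π) = 3 / 4 := by
      field_simp; ring
    rw [e1] at h1; rw [e2] at h2; rw [e3] at h3
    set A1 : Set ℕ := {p : ℕ | good p ∧ π / 4 ≤ θ p ∧ θ p ≤ π / 2}
    set A2 : Set ℕ := {p : ℕ | good p ∧ π / 2 ≤ θ p ∧ θ p ≤ 3 * π / 4}
    have hU : A1 ∪ A2 = {p : ℕ | good p ∧ π / 4 ≤ θ p ∧ θ p ≤ 3 * π / 4} := by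
      ext p
      simp only [Set.mem_union, Set.mem_setOf_eq, A1, A2]
      constructor
      · rintro (⟨hg, h, h'⟩ | ⟨hg, h, h'⟩) <;> exact ⟨hg, by linarith, by linarith⟩
      · rintro ⟨hg, h, h'⟩
        rcases le_total (θ p) (π / 2) with hc | hc
        · exact Or.inl ⟨hg, h, hc⟩
        · exact Or.inr ⟨hg, hc, h'⟩
    have hI : A1 ∩ A2 = A := by
      ext p
      simp only [Set.mem_inter_iff, Set.mem_setOf_eq, hAdef, A1, A2]
      constructor
      · rintro ⟨⟨hg, _, h1⟩, ⟨_, h2, _⟩⟩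
        exact ⟨hg, le_antisymm h1 h2⟩
      · rintro ⟨hg, h⟩
        exact ⟨⟨hg, by rw [h]; linarith, h.le⟩, ⟨hg, h.ge, by rw [h]; linarith⟩⟩
    have hkey : ∀ X : ℕ, (primeCountIn A1 X : ℝ) + primeCountIn A2 X
        = primeCountIn {p : ℕ | good p ∧ π / 4 ≤ θ p ∧ θ p ≤ 3 * π / 4} X
          + primeCountIn A X := by
      intro X
      have := primeCountIn_union_inter A1 A2 X
      rw [hU, hI] at this
      exact_mod_cast this.symm
    have heq : (fun X => (primeCountIn A X : ℝ) / d X)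
        = fun X => (primeCountIn A1 X : ℝ) / d X + (primeCountIn A2 X : ℝ) / d X
            - (primeCountIn {p : ℕ | good p ∧ π / 4 ≤ θ p ∧ θ p ≤ 3 * π / 4} X : ℝ) / d X := by
      funext X
      rw [← add_div, hkey X, add_div]
      ring
    rw [heq]
    have := (h1.add h2).sub h3
    norm_num at this ⊢
    exact this
  -- main estimate
  rw [HasPrimeDensity]
  rw [tendsto_order]
  constructor
  · intro c hc
    filter_upwards with X
    exact lt_of_lt_of_le hc (by positivity)
  · intro c hc
    -- choose ε
    set ε : ℝ := min (π / 4) (π * c / 4) with hεdef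
    have hε0 : 0 < ε := lt_min (by positivity) (by positivity)
    have hε4 : ε ≤ π / 4 := min_le_left _ _
    have hεc : ε ≤ π * c / 4 := min_le_right _ _
    have hsin : 0 < Real.sin ε := Real.sin_pos_of_pos_of_lt_pi hε0 (by linarith)
    -- interval density
    have hI := hHecke (π / 2 - ε) (π / 2 + ε) (by linarith) (by linarith) (by linarith)
    rw [if_pos (by rw [Set.mem_Icc]; constructor <;> linarith)] at hI
    have eI : (1 : ℝ) / 2 + (π / 2 + ε - (π / 2 - ε)) / (2 * π) = 1 / 2 + ε / π := by
      field_simp; ring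
    rw [eI] at hI
    set I : Set ℕ := {p : ℕ | good p ∧ π / 2 - ε ≤ θ p ∧ θ p ≤ π / 2 + ε} with hIdef
    -- threshold
    have hbnum : (b.num : ℝ) ≠ 0 := by
      exact_mod_cast Rat.num_ne_zero.2 hb
    set B : ℝ := |(b.num : ℝ)| with hBdef
    have hB0 : 0 < B := abs_pos.2 hbnum
    set c0 : ℝ := B / (2 * Real.sin ε) with hc0def
    have hc00 : 0 ≤ c0 := by positivity
    set N : ℕ := ⌈c0 ^ 2⌉₊ with hNdef
    -- membership facts for large primes in S
    have hmem : ∀ p : ℕ, p.Prime → p ∈ S → N < p → p ∈ I ∧ θ p ≠ π / 2 := by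
      intro p hp hpS hpN
      obtain ⟨hg, hab⟩ := hpS
      have hap : a p = b.num := by
        have := congrArg Rat.num hab
        simpa using this
      have hap0 : (a p : ℝ) ≠ 0 := by
        rw [hap]; exact hbnum
      have hcosp := hcos p hp hg
      have hθp := hθ p hp hg
      have hsq : 0 < Real.sqrt p := Real.sqrt_pos.2 (by exact_mod_cast hp.pos)
      -- θ p ≠ π/2
      have hne : θ p ≠ π / 2 := by
        intro h
        rw [h, Real.cos_pi_div_two] at hcosp
        field_simp at hcosp
        exact hap0 (by simpa using hcosp.symm)
      -- |cos θ p| < sin ε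
      have hc0lt : c0 < Real.sqrt p := by
        apply Real.lt_sqrt_of_sq_lt
        calc c0 ^ 2 ≤ N := Nat.le_ceil _
        _ < p := by exact_mod_cast hpN
      have habs : |Real.cos (θ p)| < Real.sin ε := by
        rw [hcosp, abs_div, abs_of_pos (by positivity : (0:ℝ) < 2 * Real.sqrt p)]
        rw [div_lt_iff₀ (by positivity)]
        have : B < Real.sqrt p * (2 * Real.sin ε) := by
          rw [hc0def, div_lt_iff₀ (by positivity)] at hc0lt
          linarith
        calc |(a p : ℝ)| = B := by rw [hap]
        _ < Real.sqrt p * (2 * Real.sin ε) := this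
        _ = Real.sin ε * (2 * Real.sqrt p) := by ring
      have h1 : Real.cos (θ p) < Real.cos (π / 2 - ε) := by
        rw [Real.cos_pi_div_two_sub]
        exact lt_of_le_of_lt (le_abs_self _) habs
      have h2 : Real.cos (π / 2 + ε) < Real.cos (θ p) := by
        have : Real.cos (π / 2 + ε) = -Real.sin ε := by
          rw [add_comm, Real.cos_add_pi_div_two]
        rw [this]
        have := (abs_lt.1 habs).1
        linarith
      have hlo : π / 2 - ε ≤ θ p := by
        by_contra h
        push_neg at h
        have := Real.strictAntiOn_cos ⟨hθp.1, hθp.2⟩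
          ⟨by linarith, by linarith⟩ h
        exact absurd h1 (not_lt.2 this.le)
      have hhi : θ p ≤ π / 2 + ε := by
        by_contra h
        push_neg at h
        have := Real.strictAntiOn_cos ⟨by linarith, by linarith⟩
          ⟨hθp.1, hθp.2⟩ h
        exact absurd h2 (not_lt.2 this.le)
      exact ⟨⟨hg, hlo, hhi⟩, hne⟩
    -- counting inequality
    have hcount : ∀ X : ℕ,
        primeCountIn S X + primeCountIn A X ≤ (N + 1) + primeCountIn I X := by
      intro X
      set Fs := (Finset.range (X + 1)).filter (fun p => p.Prime ∧ p ∈ S) with hFs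
      set FA := (Finset.range (X + 1)).filter (fun p => p.Prime ∧ p ∈ A) with hFA
      set FI := (Finset.range (X + 1)).filter (fun p => p.Prime ∧ p ∈ I) with hFI
      have eS : primeCountIn S X = Fs.card := by
        unfold primeCountIn
        refine congrArg Finset.card ?_
        ext p; rw [hFs]; simp only [Finset.mem_filter]
      have eA : primeCountIn A X = FA.card := by
        unfold primeCountIn
        refine congrArg Finset.card ?_
        ext p; rw [hFA]; simp only [Finset.mem_filter]
      have eI : primeCountIn I X = FI.card := by
        unfold primeCountIn
        refine congrArg Finset.card ?_
        ext p; rw [hFI]; simp only [Finset.mem_filter]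
      rw [eS, eA, eI]
      have hsplit : (Fs.filter (fun p => p ≤ N)).card
          + (Fs.filter (fun p => ¬ p ≤ N)).card = Fs.card :=
        Finset.card_filter_add_card_filter_not _
      have hsmall : (Fs.filter (fun p => p ≤ N)).card ≤ N + 1 := by
        calc (Fs.filter (fun p => p ≤ N)).card
            ≤ (Finset.range (N + 1)).card := by
              apply Finset.card_le_card
              intro p hp
              simp only [Finset.mem_filter] at hp
              exact Finset.mem_range.2 (Nat.lt_succ_of_le hp.2)
        _ = N + 1 := Finset.card_range _
      have hbig : ∀ p ∈ Fs.filter (fun p => ¬ p ≤ N), p ∈ FI ∧ θ p ≠ π / 2 := by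
        intro p hp
        simp only [Finset.mem_filter, hFs] at hp
        obtain ⟨⟨hpr, hprime, hpS⟩, hpN⟩ := hp
        obtain ⟨hpI, hne⟩ := hmem p hprime hpS (not_le.1 hpN)
        exact ⟨by simp only [Finset.mem_filter, hFI]; exact ⟨hpr, hprime, hpI⟩, hne⟩
      have hdisj : Disjoint (Fs.filter (fun p => ¬ p ≤ N)) FA := by
        rw [Finset.disjoint_left]
        intro p hp hpA
        simp only [Finset.mem_filter, hFA] at hpA
        exact (hbig p hp).2 hpA.2.2.2
      have hsub : (Fs.filter (fun p => ¬ p ≤ N)) ∪ FA ⊆ FI := by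
        intro p hp
        rcases Finset.mem_union.1 hp with h | h
        · exact (hbig p h).1
        · simp only [Finset.mem_filter, hFA] at h
          simp only [Finset.mem_filter, hFI]
          refine ⟨h.1, h.2.1, h.2.2.1, ?_, ?_⟩ <;> rw [h.2.2.2] <;> linarith
      have hcard2 : (Fs.filter (fun p => ¬ p ≤ N)).card + FA.card ≤ FI.card := by
        rw [← Finset.card_union_of_disjoint hdisj]
        exact Finset.card_le_card hsub
      omega
    -- pass to real ratios
    have hlim : Tendsto (fun X => ((N : ℝ) + 1) / d X
        + (primeCountIn I X : ℝ) / d X - (primeCountIn A X : ℝ) / d X)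
        atTop (nhds ((0 : ℝ) + (1 / 2 + ε / π) - 1 / 2)) :=
      ((tendsto_const_nhds.div_atTop hden).add hI).sub hA
    have hval : (0 : ℝ) + (1 / 2 + ε / π) - 1 / 2 = ε / π := by ring
    rw [hval] at hlim
    have hεπc : ε / π < c := by
      rw [div_lt_iff₀ hπ]
      have : π * c / 4 < π * c := by nlinarith
      linarith [hεc.trans_lt this]
    have hev1 := hlim.eventually (gt_mem_nhds hεπc)
    have hev2 := hden.eventually_ge_atTop 1
    filter_upwards [hev1, hev2] with X h1 h2
    have hd0 : (0 : ℝ) < d X := lt_of_lt_of_le one_pos h2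
    have hle : (primeCountIn S X : ℝ) / d X ≤ ((N : ℝ) + 1) / d X
        + (primeCountIn I X : ℝ) / d X - (primeCountIn A X : ℝ) / d X := by
      have hc := hcount X
      have hcR : (primeCountIn S X : ℝ)
          ≤ ((N : ℝ) + 1) + (primeCountIn I X : ℝ) - (primeCountIn A X : ℝ) := by
        have : (primeCountIn S X : ℝ) + (primeCountIn A X : ℝ)
            ≤ ((N : ℝ) + 1) + (primeCountIn I X : ℝ) := by exact_mod_cast hc
        linarith
      calc (primeCountIn S X : ℝ) / d X
          ≤ (((N : ℝ) + 1) + (primeCountIn I X : ℝ) - (primeCountIn A X : ℝ)) / d X :=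
            by exact div_le_div_of_nonneg_right hcR hd0.le
      _ = ((N : ℝ) + 1) / d X + (primeCountIn I X : ℝ) / d X
            - (primeCountIn A X : ℝ) / d X := by rw [sub_div, add_div]
    exact lt_of_le_of_lt hle h1
end
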